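/- Let N = 1 and write W = W₁. For every Schwartz function ψ ∈ 𝒮(ℝ, ℂ): X̂(Wψ) = W(ψ₁) where ψ₁(t) = −t·ψ(t), and Ŷ(Wψ) = W(ψ₂) where ψ₂(t) = −(1/(2πi))·ψ'(t). Thus under the Weil–Brezin–Zak transform the operators X̂ and Ŷ go over to the Schrödinger operators −x and −(1/(2πi))·d/dx on L²(ℝ, ℂ). -/

import Mathlib

noncomputable section

/-- Partial derivative in the first variable. -/
def pdx (φ : ℝ × ℝ → ℂ) (p : ℝ × ℝ) : ℂ := fderiv ℝ φ p (1, 0)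

/-- Partial derivative in the second variable. -/
def pdy (φ : ℝ × ℝ → ℂ) (p : ℝ × ℝ) : ℂ := fderiv ℝ φ p (0, 1)

/-- The operator `X̂ = (1/2πi)(∂/∂y − 2πiNx)`. -/
def Xhat (N : ℤ) (φ : ℝ × ℝ → ℂ) : ℝ × ℝ → ℂ := fun p =>
  (1 / (2 * (Real.pi : ℂ) * Complex.I)) *
    (pdy φ p - 2 * (Real.pi : ℂ) * Complex.I * (N : ℂ) * (p.1 : ℂ) * φ p)

/-- The operator `Ŷ = −(1/2πi) ∂/∂x`. -/
def Yhat (φ : ℝ × ℝ → ℂ) : ℝ × ℝ → ℂ := fun p =>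
  -(1 / (2 * (Real.pi : ℂ) * Complex.I)) * pdx φ p

/-- The Weil–Brezin–Zak transform `(W_N ψ)(x,y) = Σ_{k∈ℤ} ψ(x+k) e^{−2πiNky}`. -/
def WBZ (N : ℤ) (ψ : ℝ → ℂ) : ℝ × ℝ → ℂ := fun p =>
  ∑' k : ℤ, ψ (p.1 + k) * Complex.exp (-(2 * (Real.pi : ℂ) * Complex.I * (N : ℂ) * (k : ℂ) * (p.2 : ℂ)))

/-!
Both identities are computed term by term on the series `Σₖ ψ(x+k) e^{-2πiky}`: `∂ₓ` falls on
`ψ(x+k)`, while `∂_y` brings down `-2πik`, which combines with `-2πix` into `-2πi(x+k)`.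
Differentiating under the sum is legitimate because, by Peetre's inequality
`1 + |k| ≤ (1 + |x|)(1 + |x+k|)`, Schwartz decay of `ψ` and `ψ'` gives on every strip `|x| ≤ M`
a majorant `C (1 + |k|)⁻²` for `(1 + |k|)|ψ(x+k)|` and `(1 + |k|)|ψ'(x+k)|`.
-/

open Complex SchwartzMap ContinuousLinearMap

lemma summable_one_add_abs_sq_inv : Summable fun k : ℤ => ((1 + |(k : ℝ)|) ^ 2)⁻¹ := by
  refine (Real.summable_one_div_int_pow.mpr one_lt_two).of_norm_bounded_eventually ?_
  filter_upwards [Filter.eventually_cofinite_ne 0] with k hk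
  rw [norm_inv, norm_pow, Real.norm_of_nonneg (by positivity), one_div]
  refine inv_anti₀ (by positivity) ?_
  rw [← sq_abs (k : ℝ)]
  gcongr
  linarith

lemma one_add_abs_le_mul_one_add_abs_add (x k : ℝ) : 1 + |k| ≤ (1 + |x|) * (1 + |x + k|) := by
  have : |k| ≤ |x + k| + |x| := by simpa using abs_sub (x + k) x
  nlinarith [abs_nonneg x, abs_nonneg (x + k)]

lemma SchwartzMap.exists_summable_bound_comp_add_int {F : Type*} [NormedAddCommGroup F]
    [NormedSpace ℝ F] (φ : 𝓢(ℝ, F)) (M : ℝ) :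
    ∃ u : ℤ → ℝ, Summable u ∧
      ∀ (k : ℤ) (x : ℝ), |x| ≤ M → (1 + |(k : ℝ)|) * ‖φ (x + k)‖ ≤ u k := by
  set C := 2 ^ 3 * (Finset.Iic (3, 0)).sup (fun m => SchwartzMap.seminorm ℝ m.1 m.2) φ
  refine ⟨fun k => (1 + M) ^ 3 * C * ((1 + |(k : ℝ)|) ^ 2)⁻¹,
    summable_one_add_abs_sq_inv.mul_left _, fun k x hx => ?_⟩
  dsimp only
  have hM : 0 ≤ 1 + M := by linarith [abs_nonneg x]
  have hdecay : (1 + |x + k|) ^ 3 * ‖φ (x + k)‖ ≤ C := by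
    simpa using one_add_le_sup_seminorm_apply (m := (3, 0)) le_rfl le_rfl φ (x + k)
  have hshift : (1 + |(k : ℝ)|) ^ 3 ≤ (1 + M) ^ 3 * (1 + |x + k|) ^ 3 := by
    rw [← mul_pow]
    gcongr
    exact (one_add_abs_le_mul_one_add_abs_add x k).trans (by gcongr)
  rw [← div_eq_mul_inv, le_div_iff₀ (by positivity)]
  calc (1 + |(k : ℝ)|) * ‖φ (x + k)‖ * (1 + |(k : ℝ)|) ^ 2
      = (1 + |(k : ℝ)|) ^ 3 * ‖φ (x + k)‖ := by ring
    _ ≤ (1 + M) ^ 3 * (1 + |x + k|) ^ 3 * ‖φ (x + k)‖ := by gcongr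
    _ ≤ (1 + M) ^ 3 * C := by rw [mul_assoc]; gcongr

def wbzTerm (N : ℤ) (ψ : ℝ → ℂ) (k : ℤ) (p : ℝ × ℝ) : ℂ :=
  ψ (p.1 + k) * cexp (-(2 * (Real.pi : ℂ) * I * N * k * p.2))

def wbzTermDeriv (N : ℤ) (ψ : ℝ → ℂ) (k : ℤ) (p : ℝ × ℝ) : ℝ × ℝ →L[ℝ] ℂ :=
  (fst ℝ ℝ ℝ).smulRight (wbzTerm N (deriv ψ) k p) +
    (snd ℝ ℝ ℝ).smulRight (-(2 * (Real.pi : ℂ) * I * N * k) * wbzTerm N ψ k p)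

lemma norm_wbzTerm (N : ℤ) (ψ : ℝ → ℂ) (k : ℤ) (p : ℝ × ℝ) :
    ‖wbzTerm N ψ k p‖ = ‖ψ (p.1 + k)‖ := by
  simp [wbzTerm, Complex.norm_exp]

lemma norm_wbzTermDeriv_le (N : ℤ) (ψ : ℝ → ℂ) (k : ℤ) (p : ℝ × ℝ) :
    ‖wbzTermDeriv N ψ k p‖ ≤
      ‖deriv ψ (p.1 + k)‖ + 2 * Real.pi * |(N : ℝ)| * (|(k : ℝ)| * ‖ψ (p.1 + k)‖) := by
  refine (norm_add_le _ _).trans (add_le_add ?_ ?_) <;>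
    rw [norm_smulRight_apply]
  · rw [← norm_wbzTerm N]
    exact mul_le_of_le_one_left (norm_nonneg _) (norm_fst_le ℝ ℝ ℝ)
  · rw [norm_mul, norm_wbzTerm]
    refine (mul_le_of_le_one_left (by positivity) (norm_snd_le ℝ ℝ ℝ)).trans_eq ?_
    simp only [norm_neg, norm_mul, norm_ofNat, norm_real, Real.norm_eq_abs,
      abs_of_pos Real.pi_pos, norm_I, mul_one, norm_intCast]
    ring

lemma hasFDerivAt_wbzTerm (N : ℤ) {ψ : ℝ → ℂ} (hψ : Differentiable ℝ ψ) (k : ℤ) (p : ℝ × ℝ) :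
    HasFDerivAt (wbzTerm N ψ k) (wbzTermDeriv N ψ k p) p := by
  have hshift : HasFDerivAt (fun q : ℝ × ℝ => ψ (q.1 + k))
      ((toSpanSingleton ℝ (deriv ψ (p.1 + k))).comp (fst ℝ ℝ ℝ)) p :=
    (hψ _).hasDerivAt.hasFDerivAt.comp p (hasFDerivAt_fst.add_const _)
  have hphase := (((ofRealCLM.hasFDerivAt.comp p hasFDerivAt_snd).const_mul
    (2 * (Real.pi : ℂ) * I * N * k)).neg).cexp
  refine (hshift.mul hphase).congr_fderiv ?_
  ext <;> simp [wbzTermDeriv, wbzTerm] <;> ring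

lemma summable_wbzTerm (N : ℤ) (ψ : 𝓢(ℝ, ℂ)) (p : ℝ × ℝ) :
    Summable fun k => wbzTerm N ψ k p := by
  obtain ⟨u, hu, hbound⟩ := ψ.exists_summable_bound_comp_add_int |p.1|
  refine hu.of_norm_bounded fun k => ?_
  rw [norm_wbzTerm]
  exact (le_mul_of_one_le_left (norm_nonneg _) (by simp)).trans (hbound k p.1 le_rfl)

lemma hasSum_wbzTermDeriv (N : ℤ) (ψ : 𝓢(ℝ, ℂ)) (p : ℝ × ℝ) :
    HasSum (fun k => wbzTermDeriv N ψ k p) (fderiv ℝ (WBZ N ψ) p) := by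
  set M := |p.1| + 1
  obtain ⟨u, hu, hu_bound⟩ := ψ.exists_summable_bound_comp_add_int M
  obtain ⟨v, hv, hv_bound⟩ := (derivCLM ℝ ℂ ψ).exists_summable_bound_comp_add_int M
  have hbound : ∀ k (q : ℝ × ℝ), |q.1| ≤ M →
      ‖wbzTermDeriv N ψ k q‖ ≤ v k + 2 * Real.pi * |(N : ℝ)| * u k := by
    intro k q hq
    refine (norm_wbzTermDeriv_le N ψ k q).trans (add_le_add ?_ ?_)
    · simpa using (le_mul_of_one_le_left (norm_nonneg _) (by simp)).trans (hv_bound k q.1 hq)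
    · gcongr
      exact (mul_le_mul_of_nonneg_right (by simp) (norm_nonneg _)).trans (hu_bound k q.1 hq)
  set s : Set (ℝ × ℝ) := Set.Ioo (-M) M ×ˢ Set.univ
  have hs : ∀ q ∈ s, |q.1| ≤ M := fun q hq => (abs_lt.mpr hq.1).le
  have hp : p ∈ s := ⟨abs_lt.mp (lt_add_one _), trivial⟩
  have hsum := (hv.add (hu.mul_left _)).of_norm_bounded (hbound · p (hs p hp))
  have hF := hasFDerivAt_tsum_of_isPreconnected (hv.add (hu.mul_left _))
    (isOpen_Ioo.prod isOpen_univ) ((convex_Ioo _ _).prod convex_univ).isPreconnected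
    (fun k q _ => hasFDerivAt_wbzTerm N ψ.differentiable k q)
    (fun k q hq => hbound k q (hs q hq)) hp (summable_wbzTerm N ψ p) hp
  exact hF.fderiv ▸ hsum.hasSum

lemma hasSum_pdx_WBZ (N : ℤ) (ψ : 𝓢(ℝ, ℂ)) (p : ℝ × ℝ) :
    HasSum (fun k => wbzTerm N (deriv ψ) k p) (pdx (WBZ N ψ) p) := by
  simpa [pdx, wbzTermDeriv] using (hasSum_wbzTermDeriv N ψ p).mapL (apply ℝ ℂ (1, 0))

lemma hasSum_pdy_WBZ (N : ℤ) (ψ : 𝓢(ℝ, ℂ)) (p : ℝ × ℝ) :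
    HasSum (fun k => -(2 * (Real.pi : ℂ) * I * N * k) * wbzTerm N ψ k p) (pdy (WBZ N ψ) p) := by
  simpa [pdy, wbzTermDeriv] using (hasSum_wbzTermDeriv N ψ p).mapL (apply ℝ ℂ (0, 1))

/-- Under the Weil–Brezin–Zak transform (with `N = 1`), `X̂` and `Ŷ` go over to
the Schrödinger operators `−x` and `−(1/2πi) d/dx` on `L²(ℝ, ℂ)`. -/
theorem wbz_intertwines_heisenberg (ψ : SchwartzMap ℝ ℂ) :
    Xhat 1 (WBZ 1 ⇑ψ) = WBZ 1 (fun t : ℝ => -(t : ℂ) * ψ t) ∧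
    Yhat (WBZ 1 ⇑ψ) = WBZ 1 (fun t : ℝ => -(1 / (2 * (Real.pi : ℂ) * Complex.I)) * deriv (⇑ψ) t) := by
  constructor
  · funext p
    have hsum := ((hasSum_pdy_WBZ 1 ψ p).sub
      ((summable_wbzTerm 1 ψ p).hasSum.mul_left (2 * (Real.pi : ℂ) * I * (1 : ℤ) * p.1))).mul_left
      (1 / (2 * (Real.pi : ℂ) * I))
    refine hsum.tsum_eq.symm.trans (tsum_congr fun k => ?_)
    simp only [wbzTerm]
    push_cast
    field_simp
    ring
  · funext p
    refine ((hasSum_pdx_WBZ 1 ψ p).mul_left _).tsum_eq.symm.trans (tsum_congr fun k => ?_)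
    simp only [wbzTerm]
    ring
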